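/- Suppose additionally d₀ = sup_{x∈X} ∫_Ω |g(ω)| ρ(f(x,ω), x) μ(dω) < ∞. Then for every bounded Lipschitz F : X → Y the unique Lipschitzian solution φ^F is also bounded, and ‖φ^F‖_BL ≤ d/|1 − γ| · ‖F‖_BL, where d = max{1, (d₀ + 1 + |γ|)/(1 − λ)}; the restricted solution operator is a linear homeomorphism of (BL(X,Y), ‖·‖_BL) onto itself. -/

import Mathlib

/-!
Write `A u (x) = ∫ g(ω) u(f(x, ω)) μ(dω)` (`integralOp μ f g u x`), so that `φ = φ^F` solves
`φ = A φ + F`. By (H₂) the operator `A` multiplies Lipschitz constants by at most `λ`, hence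
`(1 - λ) Lip φ ≤ Lip F`. Splitting `A φ (x) = ∫ g(ω) (φ(f(x, ω)) - φ(x)) μ(dω) + γ φ(x)` gives
`|1 - γ| ‖φ(x)‖ ≤ d₀ Lip φ + ‖F(x)‖`, and the two estimates combine into the `BL` bound.
Applied to the difference of two solutions with the same `F` they force the difference to vanish,
and a bounded Lipschitz `ψ` is the solution for `F = ψ - A ψ`, which is again bounded Lipschitz.
-/

open MeasureTheory

/-- The smallest Lipschitz constant of a function. -/
noncomputable def lipConst {X : Type*} [MetricSpace X] {Y : Type*}
    [NormedAddCommGroup Y] (u : X → Y) : ℝ :=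
  sInf {K : ℝ | 0 ≤ K ∧ ∀ x z, ‖u x - u z‖ ≤ K * dist x z}

section LipConst

variable {X Y : Type*} [MetricSpace X] [NormedAddCommGroup Y] {u : X → Y}

lemma lipConst_nonneg (u : X → Y) : 0 ≤ lipConst u :=
  Real.sInf_nonneg fun _ hK => hK.1

lemma lipConst_le {K : ℝ} (hK0 : 0 ≤ K) (hK : ∀ x z, ‖u x - u z‖ ≤ K * dist x z) :
    lipConst u ≤ K :=
  csInf_le ⟨0, fun _ hK => hK.1⟩ ⟨hK0, hK⟩

lemma lipConst_of_isEmpty [IsEmpty X] (u : X → Y) : lipConst u = 0 :=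
  le_antisymm (lipConst_le le_rfl isEmptyElim) (lipConst_nonneg u)

lemma lipConst_const (c : Y) : lipConst (fun _ : X => c) = 0 :=
  le_antisymm (lipConst_le le_rfl fun _ _ => by simp) (lipConst_nonneg _)

lemma LipschitzWith.norm_sub_le_lipConst_mul {K : NNReal} (hu : LipschitzWith K u) (x z : X) :
    ‖u x - u z‖ ≤ lipConst u * dist x z := by
  rcases eq_or_ne x z with rfl | hxz
  · simp
  have hpos : 0 < dist x z := dist_pos.mpr hxz
  rw [← div_le_iff₀ hpos]
  refine le_csInf ⟨K, K.coe_nonneg, fun a b => ?_⟩ fun L hL => (div_le_iff₀ hpos).mpr (hL.2 x z)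
  rw [← dist_eq_norm]
  exact hu.dist_le_mul a b

end LipConst

lemma integrable_smul_comp {Ω X 𝕂 Y : Type*} [MeasurableSpace Ω] {μ : Measure Ω}
    [TopologicalSpace X] [MeasurableSpace X] [BorelSpace X] [SecondCountableTopology X]
    [TopologicalSpace.PseudoMetrizableSpace X] [RCLike 𝕂] [NormedAddCommGroup Y]
    [NormedSpace 𝕂 Y] {f : X → Ω → X} {g : Ω → 𝕂} (hf : ∀ x, Measurable (f x))
    (hg : Integrable g μ) {u : X → Y} (hu : Continuous u) {C : ℝ} (hC : ∀ x, ‖u x‖ ≤ C) (x : X) :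
    Integrable (fun ω => g ω • u (f x ω)) μ := by
  have hmeas := (hu.comp_stronglyMeasurable (hf x).stronglyMeasurable).aestronglyMeasurable (μ := μ)
  refine Integrable.mono' (hg.norm.mul_const C) (hg.aestronglyMeasurable.smul hmeas)
    (.of_forall fun ω => ?_)
  rw [norm_smul]
  exact mul_le_mul_of_nonneg_left (hC _) (norm_nonneg _)

noncomputable def integralOp {Ω X 𝕂 Y : Type*} [MeasurableSpace Ω] [RCLike 𝕂]
    [NormedAddCommGroup Y] [NormedSpace 𝕂 Y] [NormedSpace ℝ Y]
    (μ : Measure Ω) (f : X → Ω → X) (g : Ω → 𝕂) (u : X → Y) (x : X) : Y :=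
  ∫ ω, g ω • u (f x ω) ∂μ

/-- Integrability is part of the definition, so that `integralOp` is not the junk value `0`. -/
def IsSolution {Ω X 𝕂 Y : Type*} [MeasurableSpace Ω] [RCLike 𝕂]
    [NormedAddCommGroup Y] [NormedSpace 𝕂 Y] [NormedSpace ℝ Y]
    (μ : Measure Ω) (f : X → Ω → X) (g : Ω → 𝕂) (F φ : X → Y) : Prop :=
  ∀ x, Integrable (fun ω => g ω • φ (f x ω)) μ ∧ φ x = integralOp μ f g φ x + F x

section Algebra

variable {Ω X 𝕂 Y : Type*} [MeasurableSpace Ω] {μ : Measure Ω}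
  [RCLike 𝕂] [NormedAddCommGroup Y] [NormedSpace 𝕂 Y] [NormedSpace ℝ Y]
  {f : X → Ω → X} {g : Ω → 𝕂}

lemma integralOp_sub {u v : X → Y} {x : X} (hu : Integrable (fun ω => g ω • u (f x ω)) μ)
    (hv : Integrable (fun ω => g ω • v (f x ω)) μ) :
    integralOp μ f g (u - v) x = integralOp μ f g u x - integralOp μ f g v x := by
  simp only [integralOp, Pi.sub_apply, smul_sub]
  exact integral_sub hu hv

lemma IsSolution.sub {F₁ F₂ φ₁ φ₂ : X → Y} (h₁ : IsSolution μ f g F₁ φ₁)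
    (h₂ : IsSolution μ f g F₂ φ₂) : IsSolution μ f g (F₁ - F₂) (φ₁ - φ₂) := fun x => by
  refine ⟨by simp only [Pi.sub_apply, smul_sub]; exact (h₁ x).1.sub (h₂ x).1, ?_⟩
  rw [integralOp_sub (h₁ x).1 (h₂ x).1]
  simp only [Pi.sub_apply]
  rw [(h₁ x).2, (h₂ x).2]
  abel

lemma isSolution_sub_integralOp {φ : X → Y} (hI : ∀ x, Integrable (fun ω => g ω • φ (f x ω)) μ) :
    IsSolution μ f g (φ - integralOp μ f g φ) φ :=
  fun x => ⟨hI x, (add_sub_cancel _ _).symm⟩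

lemma integralOp_eq_integral_sub_add [CompleteSpace Y] (hg : Integrable g μ) {u : X → Y} {x : X}
    (hx : Integrable (fun ω => g ω • u (f x ω)) μ) :
    integralOp μ f g u x = (∫ ω, g ω • (u (f x ω) - u x) ∂μ) + (∫ ω, g ω ∂μ) • u x := by
  simp_rw [smul_sub]
  rw [integral_sub hx (hg.smul_const _), integral_smul_const, integralOp, sub_add_cancel]

lemma norm_integralOp_le (hg : Integrable g μ) {u : X → Y} {C : ℝ} (hC : ∀ x, ‖u x‖ ≤ C)
    (x : X) : ‖integralOp μ f g u x‖ ≤ (∫ ω, ‖g ω‖ ∂μ) * C := by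
  rw [← integral_mul_const]
  refine norm_integral_le_of_norm_le (hg.norm.mul_const C) (.of_forall fun ω => ?_)
  rw [norm_smul]
  exact mul_le_mul_of_nonneg_left (hC _) (norm_nonneg _)

end Algebra

section Metric

variable {Ω X 𝕂 Y : Type*} [MeasurableSpace Ω] {μ : Measure Ω}
  [RCLike 𝕂] [NormedAddCommGroup Y] [NormedSpace 𝕂 Y] [NormedSpace ℝ Y]
  [MetricSpace X] {f : X → Ω → X} {g : Ω → 𝕂}
  {F φ : X → Y} {Kφ : NNReal}

lemma norm_integral_smul_sub_le
    (hint : ∀ x, Integrable (fun ω => ‖g ω‖ * dist (f x ω) x) μ)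
    {u : X → Y} {K : NNReal} (hu : LipschitzWith K u) (x : X) :
    ‖∫ ω, g ω • (u (f x ω) - u x) ∂μ‖ ≤ lipConst u * ∫ ω, ‖g ω‖ * dist (f x ω) x ∂μ := by
  calc _ ≤ ∫ ω, lipConst u * (‖g ω‖ * dist (f x ω) x) ∂μ := by
        refine norm_integral_le_of_norm_le ((hint x).const_mul _) (.of_forall fun ω => ?_)
        rw [norm_smul, mul_left_comm]
        exact mul_le_mul_of_nonneg_left (hu.norm_sub_le_lipConst_mul _ _) (norm_nonneg _)
    _ = _ := integral_const_mul _ _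

lemma IsSolution.norm_one_sub_mul_norm_le [CompleteSpace Y] (hg : Integrable g μ)
    (hint : ∀ x, Integrable (fun ω => ‖g ω‖ * dist (f x ω) x) μ)
    (hφ : LipschitzWith Kφ φ) (hsol : IsSolution μ f g F φ) (x : X) :
    ‖1 - ∫ ω, g ω ∂μ‖ * ‖φ x‖ ≤ lipConst φ * (∫ ω, ‖g ω‖ * dist (f x ω) x ∂μ) + ‖F x‖ := by
  have h : (1 - ∫ ω, g ω ∂μ) • φ x = (∫ ω, g ω • (φ (f x ω) - φ x) ∂μ) + F x := by
    have heq := (hsol x).2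
    rw [integralOp_eq_integral_sub_add hg (hsol x).1] at heq
    rw [sub_smul, one_smul, sub_eq_iff_eq_add]
    exact heq.trans (by abel)
  rw [← norm_smul, h]
  exact (norm_add_le _ _).trans (add_le_add_left (norm_integral_smul_sub_le hint hφ x) _)

end Metric

section Measurable

variable {Ω X 𝕂 Y : Type*} [MeasurableSpace Ω] {μ : Measure Ω}
  [RCLike 𝕂] [NormedAddCommGroup Y] [NormedSpace 𝕂 Y] [NormedSpace ℝ Y]
  [MetricSpace X] [MeasurableSpace X] [BorelSpace X] [SecondCountableTopology X]
  {f : X → Ω → X} {g : Ω → 𝕂}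
  {lam : ℝ} {F φ : X → Y} {Kφ : NNReal}

lemma integrable_norm_mul_dist (hf : ∀ x, Measurable (f x)) (hg : Integrable g μ)
    (hint : ∀ x, Integrable (fun ω => ‖g ω‖ * dist (f x ω) x) μ) (x z : X) :
    Integrable (fun ω => ‖g ω‖ * dist (f x ω) (f z ω)) μ := by
  refine Integrable.mono' (((hint x).add (hg.norm.mul_const (dist x z))).add (hint z))
    (hg.aestronglyMeasurable.norm.mul ((hf x).dist (hf z)).aestronglyMeasurable)
    (.of_forall fun ω => ?_)
  rw [Real.norm_of_nonneg (by positivity)]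
  have htri : dist (f x ω) (f z ω) ≤ dist (f x ω) x + dist x z + dist (f z ω) z :=
    (dist_triangle4 _ x z _).trans_eq (by rw [dist_comm z])
  calc ‖g ω‖ * dist (f x ω) (f z ω) ≤ ‖g ω‖ * (dist (f x ω) x + dist x z + dist (f z ω) z) := by
        gcongr
    _ = _ := by simp only [Pi.add_apply]; ring

lemma norm_integralOp_sub_le (hf : ∀ x, Measurable (f x)) (hg : Integrable g μ)
    (hint : ∀ x, Integrable (fun ω => ‖g ω‖ * dist (f x ω) x) μ)
    (hcontr : ∀ x z : X, (∫ ω, ‖g ω‖ * dist (f x ω) (f z ω) ∂μ) ≤ lam * dist x z)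
    {u : X → Y} {K : NNReal} (hu : LipschitzWith K u) {x z : X}
    (hx : Integrable (fun ω => g ω • u (f x ω)) μ) (hz : Integrable (fun ω => g ω • u (f z ω)) μ) :
    ‖integralOp μ f g u x - integralOp μ f g u z‖ ≤ lam * lipConst u * dist x z := by
  rw [integralOp, integralOp, ← integral_sub hx hz]
  calc ‖∫ ω, g ω • u (f x ω) - g ω • u (f z ω) ∂μ‖
      ≤ ∫ ω, lipConst u * (‖g ω‖ * dist (f x ω) (f z ω)) ∂μ := by
        refine norm_integral_le_of_norm_le
          ((integrable_norm_mul_dist hf hg hint x z).const_mul _) (.of_forall fun ω => ?_)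
        rw [← smul_sub, norm_smul, mul_left_comm]
        exact mul_le_mul_of_nonneg_left (hu.norm_sub_le_lipConst_mul _ _) (norm_nonneg _)
    _ = lipConst u * ∫ ω, ‖g ω‖ * dist (f x ω) (f z ω) ∂μ := integral_const_mul _ _
    _ ≤ lipConst u * (lam * dist x z) := by gcongr; exacts [lipConst_nonneg u, hcontr x z]
    _ = lam * lipConst u * dist x z := by ring

lemma lipschitzWith_integralOp (hf : ∀ x, Measurable (f x)) (hg : Integrable g μ)
    (hint : ∀ x, Integrable (fun ω => ‖g ω‖ * dist (f x ω) x) μ)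
    (hcontr : ∀ x z : X, (∫ ω, ‖g ω‖ * dist (f x ω) (f z ω) ∂μ) ≤ lam * dist x z)
    {u : X → Y} {K : NNReal} (hu : LipschitzWith K u)
    (hI : ∀ x, Integrable (fun ω => g ω • u (f x ω)) μ) :
    LipschitzWith (lam * lipConst u).toNNReal (integralOp μ f g u) :=
  .of_dist_le' fun x z => by
    rw [dist_eq_norm]
    exact norm_integralOp_sub_le hf hg hint hcontr hu (hI x) (hI z)

lemma IsSolution.one_sub_mul_lipConst_le (hf : ∀ x, Measurable (f x)) (hg : Integrable g μ)
    (hint : ∀ x, Integrable (fun ω => ‖g ω‖ * dist (f x ω) x) μ) (hlam : 0 ≤ lam)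
    (hcontr : ∀ x z : X, (∫ ω, ‖g ω‖ * dist (f x ω) (f z ω) ∂μ) ≤ lam * dist x z)
    {KF : NNReal} (hF : LipschitzWith KF F) (hφ : LipschitzWith Kφ φ)
    (hsol : IsSolution μ f g F φ) :
    (1 - lam) * lipConst φ ≤ lipConst F := by
  have h : lipConst φ ≤ lam * lipConst φ + lipConst F := by
    refine lipConst_le (by have := lipConst_nonneg φ; have := lipConst_nonneg F; positivity)
      fun x z => ?_
    rw [(hsol x).2, (hsol z).2, add_sub_add_comm]
    calc _ ≤ ‖integralOp μ f g φ x - integralOp μ f g φ z‖ + ‖F x - F z‖ := norm_add_le _ _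
      _ ≤ lam * lipConst φ * dist x z + lipConst F * dist x z :=
        add_le_add (norm_integralOp_sub_le hf hg hint hcontr hφ (hsol x).1 (hsol z).1)
          (hF.norm_sub_le_lipConst_mul x z)
      _ = _ := by ring
  linarith

lemma IsSolution.unique [CompleteSpace Y] (hf : ∀ x, Measurable (f x)) (hg : Integrable g μ)
    (hint : ∀ x, Integrable (fun ω => ‖g ω‖ * dist (f x ω) x) μ) (hlam0 : 0 ≤ lam)
    (hlam1 : lam < 1)
    (hcontr : ∀ x z : X, (∫ ω, ‖g ω‖ * dist (f x ω) (f z ω) ∂μ) ≤ lam * dist x z)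
    (hγ : ∫ ω, g ω ∂μ ≠ 1) {ψ : X → Y} {Kψ : NNReal} (hφ : LipschitzWith Kφ φ)
    (hψ : LipschitzWith Kψ ψ) (hsolφ : IsSolution μ f g F φ) (hsolψ : IsSolution μ f g F ψ) :
    φ = ψ := by
  have hsol : IsSolution μ f g 0 (φ - ψ) := sub_self F ▸ hsolφ.sub hsolψ
  have hlip : LipschitzWith (Kφ + Kψ) (φ - ψ) := hφ.sub hψ
  have hL : lipConst (φ - ψ) = 0 := by
    have h := hsol.one_sub_mul_lipConst_le hf hg hint hlam0 hcontr (LipschitzWith.const 0) hlip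
    rw [lipConst_const] at h
    exact le_antisymm (nonpos_of_mul_nonpos_right h (by linarith)) (lipConst_nonneg _)
  have hc : 0 < ‖1 - ∫ ω, g ω ∂μ‖ := norm_pos_iff.mpr (sub_ne_zero.mpr (Ne.symm hγ))
  funext x
  have h := hsol.norm_one_sub_mul_norm_le hg hint hlip x
  rw [hL, zero_mul, zero_add, Pi.zero_apply, norm_zero] at h
  exact sub_eq_zero.mp (norm_le_zero_iff.mp (nonpos_of_mul_nonpos_right h hc))

lemma IsSolution.iSup_norm_add_lipConst_le [CompleteSpace Y] (hf : ∀ x, Measurable (f x))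
    (hg : Integrable g μ)
    (hint : ∀ x, Integrable (fun ω => ‖g ω‖ * dist (f x ω) x) μ) (hlam0 : 0 ≤ lam)
    (hcontr : ∀ x z : X, (∫ ω, ‖g ω‖ * dist (f x ω) (f z ω) ∂μ) ≤ lam * dist x z)
    (hγ : ∫ ω, g ω ∂μ ≠ 1) {d₀ d : ℝ} (hd₀ : ∀ x, (∫ ω, ‖g ω‖ * dist (f x ω) x ∂μ) ≤ d₀)
    (hd1 : 1 ≤ d) (hd : d₀ + 1 + ‖∫ ω, g ω ∂μ‖ ≤ d * (1 - lam))
    {KF : NNReal} (hF : LipschitzWith KF F) {C : ℝ} (hC : ∀ x, ‖F x‖ ≤ C)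
    (hφ : LipschitzWith Kφ φ) (hsol : IsSolution μ f g F φ) :
    (∃ C, ∀ x, ‖φ x‖ ≤ C) ∧
      (⨆ x, ‖φ x‖) + lipConst φ ≤ d / ‖1 - ∫ ω, g ω ∂μ‖ * ((⨆ x, ‖F x‖) + lipConst F) := by
  set c := ‖1 - ∫ ω, g ω ∂μ‖
  set M := ⨆ x, ‖F x‖
  have hc : 0 < c := norm_pos_iff.mpr (sub_ne_zero.mpr (Ne.symm hγ))
  have hM (x : X) : ‖F x‖ ≤ M := le_ciSup ⟨C, Set.forall_mem_range.2 hC⟩ x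
  have hpt (x : X) : ‖φ x‖ ≤ (lipConst φ * d₀ + M) / c := by
    rw [le_div_iff₀' hc]
    exact (hsol.norm_one_sub_mul_norm_le hg hint hφ x).trans
      (add_le_add (mul_le_mul_of_nonneg_left (hd₀ x) (lipConst_nonneg φ)) (hM x))
  refine ⟨⟨_, hpt⟩, ?_⟩
  -- `ciSup_le` needs `X ≠ ∅`; for empty `X` every `⨆` and `lipConst` is `0`.
  rcases isEmpty_or_nonempty X with hX | hX
  · simp [M, lipConst_of_isEmpty]
  have hsup : c * ⨆ x, ‖φ x‖ ≤ lipConst φ * d₀ + M := (le_div_iff₀' hc).1 (ciSup_le hpt)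
  have hc1 : c ≤ 1 + ‖∫ ω, g ω ∂μ‖ := (norm_sub_le _ _).trans_eq (by rw [norm_one])
  have hM0 : 0 ≤ M := Real.iSup_nonneg fun x => norm_nonneg _
  have hL0 := lipConst_nonneg φ
  rw [div_mul_eq_mul_div, le_div_iff₀' hc]
  calc c * ((⨆ x, ‖φ x‖) + lipConst φ) = c * (⨆ x, ‖φ x‖) + c * lipConst φ := mul_add _ _ _
    _ ≤ lipConst φ * d₀ + M + (1 + ‖∫ ω, g ω ∂μ‖) * lipConst φ := by gcongr
    _ = lipConst φ * (d₀ + 1 + ‖∫ ω, g ω ∂μ‖) + M := by ring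
    _ ≤ lipConst φ * (d * (1 - lam)) + d * M := by
      gcongr
      exact le_mul_of_one_le_left hM0 hd1
    _ = d * ((1 - lam) * lipConst φ) + d * M := by ring
    _ ≤ d * lipConst F + d * M := by
      gcongr ?_ + _
      exact mul_le_mul_of_nonneg_left
        (hsol.one_sub_mul_lipConst_le hf hg hint hlam0 hcontr hF hφ) (by linarith)
    _ = d * (M + lipConst F) := by ring

end Measurable

theorem stmt_13_general {Ω : Type*} [MeasurableSpace Ω] (μ : MeasureTheory.Measure Ω)
    {X : Type*} [MetricSpace X] [TopologicalSpace.SeparableSpace X]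
    [MeasurableSpace X] [BorelSpace X]
    {𝕂 : Type*} [RCLike 𝕂]
    {Y : Type*} [NormedAddCommGroup Y] [NormedSpace 𝕂 Y] [NormedSpace ℝ Y] [CompleteSpace Y]
    (f : X → Ω → X) (g : Ω → 𝕂)
    (hf : ∀ x, Measurable (f x))
    (hg : Integrable g μ)
    (hint : ∀ x, Integrable (fun ω => ‖g ω‖ * dist (f x ω) x) μ)
    (lam : ℝ) (hlam : lam ∈ Set.Ico (0 : ℝ) 1)
    (hcontr : ∀ x z : X, (∫ ω, ‖g ω‖ * dist (f x ω) (f z ω) ∂μ) ≤ lam * dist x z)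
    (γ : 𝕂) (hγ : γ = ∫ ω, g ω ∂μ) (hγ1 : γ ≠ 1)
    (d₀ d : ℝ)
    (hd₀ : ∀ x, (∫ ω, ‖g ω‖ * dist (f x ω) x ∂μ) ≤ d₀)
    (hd : d = max 1 ((d₀ + 1 + ‖γ‖) / (1 - lam)))
    (T : (X → Y) → X → Y)
    (hT : ∀ F : X → Y, (∃ K : NNReal, LipschitzWith K F) →
      ((∃ K : NNReal, LipschitzWith K (T F)) ∧
        ∀ x, Integrable (fun ω => g ω • T F (f x ω)) μ ∧
          T F x = (∫ ω, g ω • T F (f x ω) ∂μ) + F x)) :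
    (∀ F : X → Y, (∃ K : NNReal, LipschitzWith K F) → (∃ C, ∀ x, ‖F x‖ ≤ C) →
      (∃ C, ∀ x, ‖T F x‖ ≤ C) ∧
        (⨆ x : X, ‖T F x‖) + lipConst (T F) ≤
          d / ‖1 - γ‖ * ((⨆ x : X, ‖F x‖) + lipConst F)) ∧
    (∀ F G : X → Y, (∃ K : NNReal, LipschitzWith K F) → (∃ C, ∀ x, ‖F x‖ ≤ C) →
      (∃ K : NNReal, LipschitzWith K G) → (∃ C, ∀ x, ‖G x‖ ≤ C) →
      T F = T G → F = G) ∧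
    (∀ ψ : X → Y, (∃ K : NNReal, LipschitzWith K ψ) → (∃ C, ∀ x, ‖ψ x‖ ≤ C) →
      ∃ F : X → Y, ((∃ K : NNReal, LipschitzWith K F) ∧ (∃ C, ∀ x, ‖F x‖ ≤ C)) ∧
        T F = ψ) := by
  obtain ⟨hlam0, hlam1⟩ := hlam
  subst hγ
  have hd1 : 1 ≤ d := hd ▸ le_max_left _ _
  have hd' : d₀ + 1 + ‖∫ ω, g ω ∂μ‖ ≤ d * (1 - lam) :=
    (div_le_iff₀ (by linarith)).1 (hd ▸ le_max_right _ _)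
  refine ⟨fun F ⟨_, hF⟩ ⟨_, hC⟩ => ?_, fun F G hF _ hG _ hTFG => ?_, fun ψ ⟨_, hψ⟩ ⟨C, hC⟩ => ?_⟩
  · obtain ⟨⟨_, hφ⟩, hsol : IsSolution μ f g F (T F)⟩ := hT F ⟨_, hF⟩
    exact hsol.iSup_norm_add_lipConst_le hf hg hint hlam0 hcontr hγ1 hd₀ hd1 hd' hF hC hφ
  · funext x
    have h := ((hT F hF).2 x).2
    rw [hTFG, ((hT G hG).2 x).2] at h
    exact (add_left_cancel h).symm
  · have hI := integrable_smul_comp hf hg hψ.continuous hC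
    set F := ψ - integralOp μ f g ψ
    have hF : LipschitzWith _ F := hψ.sub (lipschitzWith_integralOp hf hg hint hcontr hψ hI)
    refine ⟨F, ⟨⟨_, hF⟩, ⟨_, fun x => norm_sub_le_of_le (hC x) (norm_integralOp_le hg hC x)⟩⟩, ?_⟩
    obtain ⟨⟨_, hφ⟩, hsol : IsSolution μ f g F (T F)⟩ := hT F ⟨_, hF⟩
    exact hsol.unique hf hg hint hlam0 hlam1 hcontr hγ1 hφ hψ (isSolution_sub_integralOp hI)

/-- Theorem 4.1(ii): if d₀ = sup_x ∫ |g| ρ(f(x,ω),x) dμ < ∞, the solution operator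
maps bounded Lipschitz functions to bounded Lipschitz functions, is a linear
homeomorphism of (BL(X,Y), ‖·‖_BL) onto itself, and ‖φ^F‖_BL ≤ d/|1−γ| ‖F‖_BL. -/
theorem stmt_13 {Ω : Type*} [MeasurableSpace Ω] (μ : MeasureTheory.Measure Ω)
    {X : Type*} [MetricSpace X] [TopologicalSpace.SeparableSpace X]
    [MeasurableSpace X] [BorelSpace X]
    {𝕂 : Type*} [RCLike 𝕂]
    {Y : Type*} [NormedAddCommGroup Y] [NormedSpace 𝕂 Y] [NormedSpace ℝ Y] [CompleteSpace Y]
    (f : X → Ω → X) (g : Ω → 𝕂)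
    (hf : ∀ x, Measurable (f x))
    (hg : Integrable g μ)
    (hint : ∀ x, Integrable (fun ω => ‖g ω‖ * dist (f x ω) x) μ)
    (lam : ℝ) (hlam : lam ∈ Set.Ico (0 : ℝ) 1)
    (hcontr : ∀ x z : X, (∫ ω, ‖g ω‖ * dist (f x ω) (f z ω) ∂μ) ≤ lam * dist x z)
    (γ : 𝕂) (hγ : γ = ∫ ω, g ω ∂μ) (hγ1 : γ ≠ 1)
    (d₀ d : ℝ)
    (hd₀ : ∀ x, (∫ ω, ‖g ω‖ * dist (f x ω) x ∂μ) ≤ d₀)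
    (hd₀sup : d₀ = ⨆ x : X, ∫ ω, ‖g ω‖ * dist (f x ω) x ∂μ)
    (hd : d = max 1 ((d₀ + 1 + ‖γ‖) / (1 - lam)))
    (T : (X → Y) → X → Y)
    (hT : ∀ F : X → Y, (∃ K : NNReal, LipschitzWith K F) →
      ((∃ K : NNReal, LipschitzWith K (T F)) ∧
        ∀ x, Integrable (fun ω => g ω • T F (f x ω)) μ ∧
          T F x = (∫ ω, g ω • T F (f x ω) ∂μ) + F x)) :
    (∀ F : X → Y, (∃ K : NNReal, LipschitzWith K F) → (∃ C, ∀ x, ‖F x‖ ≤ C) →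
      (∃ C, ∀ x, ‖T F x‖ ≤ C) ∧
        (⨆ x : X, ‖T F x‖) + lipConst (T F) ≤
          d / ‖1 - γ‖ * ((⨆ x : X, ‖F x‖) + lipConst F)) ∧
    (∀ F G : X → Y, (∃ K : NNReal, LipschitzWith K F) → (∃ C, ∀ x, ‖F x‖ ≤ C) →
      (∃ K : NNReal, LipschitzWith K G) → (∃ C, ∀ x, ‖G x‖ ≤ C) →
      T F = T G → F = G) ∧
    (∀ ψ : X → Y, (∃ K : NNReal, LipschitzWith K ψ) → (∃ C, ∀ x, ‖ψ x‖ ≤ C) →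
      ∃ F : X → Y, ((∃ K : NNReal, LipschitzWith K F) ∧ (∃ C, ∀ x, ‖F x‖ ≤ C)) ∧
        T F = ψ) :=
  stmt_13_general μ f g hf hg hint lam hlam hcontr γ hγ hγ1 d₀ d hd₀ hd T hT
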